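/- For every 1 ≤ i ≤ m−2, the operators on ℂ·IGLT_m(λ) satisfy the braid relation π_i ∘ π_{i+1} ∘ π_i = π_{i+1} ∘ π_i ∘ π_{i+1}. -/

import Mathlib

open Classical

noncomputable section

namespace Genomic

/-- `lam` encodes a partition of `n`: `lam r` is the length of the `r`-th row (rows are
1-based, indexed from the top). -/
def IsPartitionOf (n : ℕ) (lam : ℕ → ℕ) : Prop :=
  (∀ r, 1 ≤ r → lam (r + 1) ≤ lam r) ∧ (∀ r, n < r → lam r = 0) ∧
    (∑ r ∈ Finset.Icc 1 n, lam r) = n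

/-- `p = (r, c)` is a box of the Young diagram of `lam` (row `r` from the top,
column `c` from the left, both 1-based). -/
def IsCell (lam : ℕ → ℕ) (p : ℕ × ℕ) : Prop :=
  1 ≤ p.1 ∧ 1 ≤ p.2 ∧ p.2 ≤ lam p.1

/-- `T` is an increasing gapless tableau of shape `lam` with maximum entry `m`
(normalized to take the value `0` outside the Young diagram). -/
def IsIGLT (lam : ℕ → ℕ) (m : ℕ) (T : ℕ × ℕ → ℕ) : Prop :=
  (∀ p, ¬ IsCell lam p → T p = 0) ∧
  (∀ p, IsCell lam p → 1 ≤ T p ∧ T p ≤ m) ∧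
  (∀ r c, IsCell lam (r, c) → IsCell lam (r, c + 1) → T (r, c) < T (r, c + 1)) ∧
  (∀ r c, IsCell lam (r, c) → IsCell lam (r + 1, c) → T (r, c) < T (r + 1, c)) ∧
  (∀ k, 1 ≤ k → k ≤ m → ∃ p, IsCell lam p ∧ T p = k)

/-- The set of boxes of `T` containing the entry `i`, i.e. `T⁻¹(i)`. -/
def cellsWith (lam : ℕ → ℕ) (T : ℕ × ℕ → ℕ) (i : ℕ) : Set (ℕ × ℕ) :=
  {p | IsCell lam p ∧ T p = i}

def rowSet (lam : ℕ → ℕ) (T : ℕ × ℕ → ℕ) (i : ℕ) : Set ℕ :=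
  {r | ∃ c, IsCell lam (r, c) ∧ T (r, c) = i}

/-- The row `r_t^{(i)}` of `Top_i(T)`. -/
def rtop (lam : ℕ → ℕ) (T : ℕ × ℕ → ℕ) (i : ℕ) : ℕ := sInf (rowSet lam T i)

/-- The row `r_b^{(i)}` of `Bot_i(T)`. -/
def rbot (lam : ℕ → ℕ) (T : ℕ × ℕ → ℕ) (i : ℕ) : ℕ := sSup (rowSet lam T i)

/-- The column `c_t^{(i)}` of `Top_i(T)`. -/
def ctop (lam : ℕ → ℕ) (T : ℕ × ℕ → ℕ) (i : ℕ) : ℕ :=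
  sInf {c | IsCell lam (rtop lam T i, c) ∧ T (rtop lam T i, c) = i}

/-- The column `c_b^{(i)}` of `Bot_i(T)`. -/
def cbot (lam : ℕ → ℕ) (T : ℕ × ℕ → ℕ) (i : ℕ) : ℕ :=
  sInf {c | IsCell lam (rbot lam T i, c) ∧ T (rbot lam T i, c) = i}

/-- `i` is a descent of `T`. -/
def IsDescent (lam : ℕ → ℕ) (T : ℕ × ℕ → ℕ) (i : ℕ) : Prop :=
  rtop lam T i < rbot lam T (i + 1)

/-- `i` is an attacking descent of `T`. -/
def IsAttacking (lam : ℕ → ℕ) (T : ℕ × ℕ → ℕ) (i : ℕ) : Prop :=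
  IsDescent lam T i ∧
    ((∃ r c, IsCell lam (r, c) ∧ IsCell lam (r + 1, c) ∧ T (r, c) = i ∧ T (r + 1, c) = i + 1) ∨
      (∃ p, IsCell lam p ∧ T p = i + 1 ∧ p.1 ≤ rbot lam T i))

/-- `s_i · T`: exchange the entries `i` and `i+1` of `T`. -/
def swapTab (lam : ℕ → ℕ) (i : ℕ) (T : ℕ × ℕ → ℕ) : ℕ × ℕ → ℕ := fun p =>
  if IsCell lam p then (if T p = i then i + 1 else if T p = i + 1 then i else T p) else 0

/-- The `0`-Hecke operator `π_i` on the free `ℂ`-module on fillings of the diagram of `lam`. -/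
def piOp (lam : ℕ → ℕ) (i : ℕ) :
    ((ℕ × ℕ → ℕ) →₀ ℂ) →ₗ[ℂ] ((ℕ × ℕ → ℕ) →₀ ℂ) :=
  Finsupp.lsum ℂ fun T => LinearMap.toSpanSingleton ℂ ((ℕ × ℕ → ℕ) →₀ ℂ)
    (if ¬ IsDescent lam T i then Finsupp.single T (1 : ℂ)
     else if IsAttacking lam T i then 0
     else Finsupp.single (swapTab lam i T) (1 : ℂ))

/-- The basis vectors of `ℂ · IGLT_m(λ)` inside the ambient free module. -/
def iglSingles (lam : ℕ → ℕ) (m : ℕ) : Set ((ℕ × ℕ → ℕ) →₀ ℂ) :=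
  {f | ∃ T, IsIGLT lam m T ∧ f = Finsupp.single T (1 : ℂ)}

/-! ### Lattice paths `Γ_i(T)` and the equivalence relation `∼` -/

/-- The (extended) entry of the box `p` is `< i`: boxes outside the positive quadrant count
as `-∞`, boxes in the positive quadrant but outside the diagram count as `+∞`. -/
def entryLt (lam : ℕ → ℕ) (T : ℕ × ℕ → ℕ) (i : ℕ) (p : ℕ × ℕ) : Prop :=
  p.1 = 0 ∨ p.2 = 0 ∨ (IsCell lam p ∧ T p < i)

/-- The (extended) entry of the box `p` is `≥ i`. -/
def entryGe (lam : ℕ → ℕ) (T : ℕ × ℕ → ℕ) (i : ℕ) (p : ℕ × ℕ) : Prop :=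
  IsCell lam p → i ≤ T p

/-- One step of the lattice path `Γ_i(T)`: from the lattice point `p = ⟨r,c⟩` either one
step up to `⟨r-1,c⟩` (the left box has entry `< i`, the right box entry `≥ i`) or one step
right to `⟨r,c+1⟩` (the above box has entry `< i`, the below box entry `≥ i`). -/
def gammaStep (lam : ℕ → ℕ) (T : ℕ × ℕ → ℕ) (i : ℕ) (p q : ℕ × ℕ) : Prop :=
  (1 ≤ p.1 ∧ q = (p.1 - 1, p.2) ∧ entryLt lam T i (p.1, p.2) ∧
      entryGe lam T i (p.1, p.2 + 1)) ∨
  (q = (p.1, p.2 + 1) ∧ entryLt lam T i (p.1, p.2 + 1) ∧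
      entryGe lam T i (p.1 + 1, p.2 + 1))

/-- `V` is (the vertex set of) the lattice path `Γ_i(T)`, running from the bottom-left
corner of `Bot_i(T)` to the top-right corner of `Top_i(T)`. -/
def IsGammaPath (lam : ℕ → ℕ) (T : ℕ × ℕ → ℕ) (i : ℕ) (V : Set (ℕ × ℕ)) : Prop :=
  ∃ P : List (ℕ × ℕ), P ≠ [] ∧
    P.head? = some (rbot lam T i, cbot lam T i - 1) ∧
    P.getLast? = some (rtop lam T i - 1, ctop lam T i) ∧
    List.Chain' (gammaStep lam T i) P ∧ V = {p | p ∈ P}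

/-- `i ∈ I(T)`: the entry `i` occupies more than one box of `T`. -/
def hasMultiple (lam : ℕ → ℕ) (T : ℕ × ℕ → ℕ) (i : ℕ) : Prop :=
  ∃ p q, p ≠ q ∧ p ∈ cellsWith lam T i ∧ q ∈ cellsWith lam T i

/-- The set of pairs `(Γ_i(T), T⁻¹(i))` for `i ∈ I(T)`. -/
def gammaData (lam : ℕ → ℕ) (T : ℕ × ℕ → ℕ) : Set (Set (ℕ × ℕ) × Set (ℕ × ℕ)) :=
  {d | ∃ i, hasMultiple lam T i ∧ IsGammaPath lam T i d.1 ∧ d.2 = cellsWith lam T i}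

/-- The equivalence relation `∼` on tableaux. -/
def TabEquiv (lam : ℕ → ℕ) (T₁ T₂ : ℕ × ℕ → ℕ) : Prop :=
  gammaData lam T₁ = gammaData lam T₂

/-! ### Source and sink tableaux -/

def IsSourceTab (lam : ℕ → ℕ) (m : ℕ) (T : ℕ × ℕ → ℕ) : Prop :=
  IsIGLT lam m T ∧
    ¬ ∃ T' i, IsIGLT lam m T' ∧ T' ≠ T ∧ 1 ≤ i ∧ i ≤ m - 1 ∧
      piOp lam i (Finsupp.single T' (1 : ℂ)) = Finsupp.single T (1 : ℂ)

def IsSinkTab (lam : ℕ → ℕ) (m : ℕ) (T : ℕ × ℕ → ℕ) : Prop :=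
  IsIGLT lam m T ∧
    ¬ ∃ T' i, IsIGLT lam m T' ∧ T' ≠ T ∧ 1 ≤ i ∧ i ≤ m - 1 ∧
      piOp lam i (Finsupp.single T (1 : ℂ)) = Finsupp.single T' (1 : ℂ)

/-! ### Permutations, words, length and the left weak Bruhat order -/

def isWordIn (m : ℕ) (w : List ℕ) : Prop := ∀ j ∈ w, 1 ≤ j ∧ j ≤ m - 1

/-- The product `s_{i_p} ⋯ s_{i_2} s_{i_1}` of the simple transpositions indexed by the
word `w = [i_p, …, i_2, i_1]`. -/
def wordProd (w : List ℕ) : Equiv.Perm ℕ := (w.map fun j => Equiv.swap j (j + 1)).prod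

/-- The Coxeter length of `σ` as an element of `S_m`. -/
def permLength (m : ℕ) (σ : Equiv.Perm ℕ) : ℕ :=
  sInf {k | ∃ w, isWordIn m w ∧ wordProd w = σ ∧ w.length = k}

/-- `w` is a reduced word for `σ ∈ S_m`. -/
def IsReducedWord (m : ℕ) (w : List ℕ) (σ : Equiv.Perm ℕ) : Prop :=
  isWordIn m w ∧ wordProd w = σ ∧ w.length = permLength m σ

/-- `i ∈ Des_L(σ)`, i.e. `ℓ(s_i σ) < ℓ(σ)`. -/
def DesL (m : ℕ) (σ : Equiv.Perm ℕ) (i : ℕ) : Prop :=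
  permLength m (Equiv.swap i (i + 1) * σ) < permLength m σ

/-- Covering relation of the left weak Bruhat order: `σ ⋖ s_i σ` for `i ∉ Des_L(σ)`. -/
def weakCovL (m : ℕ) (σ ρ : Equiv.Perm ℕ) : Prop :=
  ∃ i, 1 ≤ i ∧ i ≤ m - 1 ∧ ¬ DesL m σ i ∧ ρ = Equiv.swap i (i + 1) * σ

/-- The left weak Bruhat order `⪯_L` on `S_m`. -/
def weakLe (m : ℕ) : Equiv.Perm ℕ → Equiv.Perm ℕ → Prop :=
  Relation.ReflTransGen (weakCovL m)

/-- The left weak Bruhat interval `[σ, ρ]_L`. -/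
def weakInterval (m : ℕ) (σ ρ : Equiv.Perm ℕ) : Set (Equiv.Perm ℕ) :=
  {γ | weakLe m σ γ ∧ weakLe m γ ρ}

/-- `σ` is a permutation of `{1, …, m}`. -/
def InSymm (m : ℕ) (σ : Equiv.Perm ℕ) : Prop := ∀ x, σ x ≠ x → 1 ≤ x ∧ x ≤ m

/-- `π_{i_p} ⋯ π_{i_2} π_{i_1} (x)` for the word `w = [i_p, …, i_2, i_1]`. -/
def applyWord (lam : ℕ → ℕ) (w : List ℕ) (x : (ℕ × ℕ → ℕ) →₀ ℂ) : (ℕ × ℕ → ℕ) →₀ ℂ :=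
  w.foldr (fun j y => piOp lam j y) x

/-- The partial order `⪯_E`: `T₂ = π_σ (T₁)` for some `σ ∈ S_m`. -/
def precE (lam : ℕ → ℕ) (m : ℕ) (T₁ T₂ : ℕ × ℕ → ℕ) : Prop :=
  ∃ σ w, IsReducedWord m w σ ∧
    applyWord lam w (Finsupp.single T₁ (1 : ℂ)) = Finsupp.single T₂ (1 : ℂ)

/-! ### Blocks `H_j`, reading words and `sfread` -/

/-- The set of descents of `TE` (inside `[1, m-1]`). -/
def descValsAll (lam : ℕ → ℕ) (m : ℕ) (TE : ℕ × ℕ → ℕ) : Set ℕ :=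
  {d | 1 ≤ d ∧ d ≤ m - 1 ∧ IsDescent lam TE d}

/-- `k`, the number of descents of `TE`. -/
def numDesc (lam : ℕ → ℕ) (m : ℕ) (TE : ℕ × ℕ → ℕ) : ℕ := (descValsAll lam m TE).ncard

/-- The index `j` such that `d_{j-1} < v ≤ d_j`. -/
def blockOf (lam : ℕ → ℕ) (m : ℕ) (TE : ℕ × ℕ → ℕ) (v : ℕ) : ℕ :=
  1 + {d | d ∈ descValsAll lam m TE ∧ d < v}.ncard

/-- The horizontal strip `H_j = TE⁻¹([d_{j-1}+1, d_j])`. -/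
def Hset (lam : ℕ → ℕ) (m : ℕ) (TE : ℕ × ℕ → ℕ) (j : ℕ) : Set (ℕ × ℕ) :=
  {p | IsCell lam p ∧ blockOf lam m TE (TE p) = j}

/-- The `(b+1)`-st smallest element of a set of naturals. -/
def nthInf (S : Set ℕ) : ℕ → ℕ
  | 0 => sInf S
  | b + 1 => nthInf {v | v ∈ S ∧ sInf S < v} b

/-- `d_j`, with `d_0 = 0` and `d_{k+1} = m`. -/
def dval (lam : ℕ → ℕ) (m : ℕ) (TE : ℕ × ℕ → ℕ) (j : ℕ) : ℕ :=
  if j = 0 then 0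
  else if numDesc lam m TE < j then m
  else nthInf (descValsAll lam m TE) (j - 1)

/-- The word obtained by reading the entries of `T` on the boxes of `S` from right to
left (i.e. by decreasing column). -/
def stripWord (lam : ℕ → ℕ) (T : ℕ × ℕ → ℕ) (S : Set (ℕ × ℕ)) : List ℕ :=
  (List.range (lam 1 + 1)).reverse.filterMap fun c =>
    if h : ∃ r, (r, c) ∈ S then some (T (sInf {r | (r, c) ∈ S}, c)) else none

/-- The standardized reading word of `T` (as a list): the concatenation over
`j = 1, …, k+1` of the de-duplicated right-to-left readings of `T` on `H_j`. -/
def sfreadList (lam : ℕ → ℕ) (m : ℕ) (TE T : ℕ × ℕ → ℕ) : List ℕ :=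
  ((List.range (numDesc lam m TE + 1)).map fun j0 =>
    (stripWord lam T (Hset lam m TE (j0 + 1))).dedup).flatten

/-- `u` is the one-line notation of `σ ∈ S_m`. -/
def IsOneLineOf (m : ℕ) (u : List ℕ) (σ : Equiv.Perm ℕ) : Prop :=
  InSymm m σ ∧ u.length = m ∧ ∀ j < m, σ (j + 1) = u.getD j 0

/-- The permutation of `S_m` whose one-line notation is `u` (junk value if none exists). -/
def toPerm (m : ℕ) (u : List ℕ) : Equiv.Perm ℕ :=
  if h : ∃ σ, IsOneLineOf m u σ then h.choose else 1

/-- The standardized reading word `sfread(T) ∈ S_m`. -/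
def sfread (lam : ℕ → ℕ) (m : ℕ) (TE T : ℕ × ℕ → ℕ) : Equiv.Perm ℕ :=
  toPerm m (sfreadList lam m TE T)

/-! ### The generalized composition `α_E`, standard ribbon tableaux, and `η` -/

/-- The `j`-th and `(j+1)`-st columns of `rd(α_E)` are connected, i.e.
`Bot_{d_{j-1}+1}(T_E)` is weakly left of `Top_{d_{j+1}}(T_E)`. -/
def connAt (lam : ℕ → ℕ) (m : ℕ) (TE : ℕ × ℕ → ℕ) (j : ℕ) : Prop :=
  cbot lam TE (dval lam m TE (j - 1) + 1) ≤ ctop lam TE (dval lam m TE (j + 1))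

/-- The length `d_j - d_{j-1}` of the `j`-th column of `rd(α_E)`. -/
def colLen (lam : ℕ → ℕ) (m : ℕ) (TE : ℕ × ℕ → ℕ) (j : ℕ) : ℕ :=
  dval lam m TE j - dval lam m TE (j - 1)

/-- The row coordinate (in `ℤ`, increasing downwards) of the top box of the `j`-th column
of the generalized ribbon diagram `rd(α_E)`. -/
def topRowZ (lam : ℕ → ℕ) (m : ℕ) (TE : ℕ × ℕ → ℕ) : ℕ → ℤ
  | 0 => 0
  | 1 => 0
  | j + 2 =>
      (if connAt lam m TE (j + 1) then topRowZ lam m TE (j + 1)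
       else topRowZ lam m TE (j + 1) - 1) - ((colLen lam m TE (j + 2) : ℤ) - 1)

/-- The row coordinate of the `b`-th box from the top of the `j`-th column of `rd(α_E)`. -/
def rowOfBox (lam : ℕ → ℕ) (m : ℕ) (TE : ℕ × ℕ → ℕ) (j b : ℕ) : ℤ :=
  topRowZ lam m TE j + (b : ℤ) - 1

/-- `(j, b)` is a box of `rd(α_E)`: column `j ∈ [1, k+1]`, box `b ∈ [1, d_j - d_{j-1}]`
from the top. -/
def inRangeBox (lam : ℕ → ℕ) (m : ℕ) (TE : ℕ × ℕ → ℕ) (j b : ℕ) : Prop :=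
  1 ≤ j ∧ j ≤ numDesc lam m TE + 1 ∧ 1 ≤ b ∧ b ≤ colLen lam m TE j

/-- `F` is a standard ribbon tableau of shape `α_E` (encoded by column and position from
the top; normalized to `0` outside `rd(α_E)`). -/
def IsSRT (lam : ℕ → ℕ) (m : ℕ) (TE : ℕ × ℕ → ℕ) (F : ℕ → ℕ → ℕ) : Prop :=
  (∀ j b, ¬ inRangeBox lam m TE j b → F j b = 0) ∧
  (∀ j b, inRangeBox lam m TE j b → 1 ≤ F j b ∧ F j b ≤ m) ∧
  (∀ v, 1 ≤ v → v ≤ m →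
    ∃! q : ℕ × ℕ, inRangeBox lam m TE q.1 q.2 ∧ F q.1 q.2 = v) ∧
  (∀ j b, inRangeBox lam m TE j b → inRangeBox lam m TE j (b + 1) → F j b < F j (b + 1)) ∧
  (∀ j, 1 ≤ j → j ≤ numDesc lam m TE → connAt lam m TE j →
    F j 1 < F (j + 1) (colLen lam m TE (j + 1)))

/-- The position (1-based, from the left) of the box `p` within the strip `H_j` counted
so that it increases by one along each connected component and repeats across breaks. -/
def idxIn (lam : ℕ → ℕ) (m : ℕ) (TE : ℕ × ℕ → ℕ) (j : ℕ) (p : ℕ × ℕ) : ℕ :=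
  1 + {q | q ∈ Hset lam m TE j ∧ q.2 < p.2 ∧ (q.1, q.2 + 1) ∈ Hset lam m TE j}.ncard

/-- The filling `T_𝒯` of the Young diagram of `lam` associated to an SRT `F`. -/
def Tfill (lam : ℕ → ℕ) (m : ℕ) (TE : ℕ × ℕ → ℕ) (F : ℕ → ℕ → ℕ) : ℕ × ℕ → ℕ := fun p =>
  if IsCell lam p then
    F (blockOf lam m TE (TE p)) (idxIn lam m TE (blockOf lam m TE (TE p)) p)
  else 0

/-- The linear map `η : ℂ·SRT(α_E) → ℂ·E`, `𝒯 ↦ T_𝒯` if `T_𝒯 ∈ E` and `𝒯 ↦ 0` otherwise. -/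
def etaMap (lam : ℕ → ℕ) (m : ℕ) (TE : ℕ × ℕ → ℕ) :
    ((ℕ → ℕ → ℕ) →₀ ℂ) →ₗ[ℂ] ((ℕ × ℕ → ℕ) →₀ ℂ) :=
  Finsupp.lsum ℂ fun F => LinearMap.toSpanSingleton ℂ ((ℕ × ℕ → ℕ) →₀ ℂ)
    (if IsSRT lam m TE F ∧ IsIGLT lam m (Tfill lam m TE F) ∧
        TabEquiv lam TE (Tfill lam m TE F)
     then Finsupp.single (Tfill lam m TE F) (1 : ℂ) else 0)

/-- The set of values of `T` on the strip `H_j`. -/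
def valSet (lam : ℕ → ℕ) (m : ℕ) (TE T : ℕ × ℕ → ℕ) (j : ℕ) : Set ℕ :=
  {v | ∃ p ∈ Hset lam m TE j, T p = v}

/-- The standard ribbon tableau `𝒯_T` whose `j`-th column consists of the values of `T`
on `H_j`, increasing from top to bottom. -/
def canonSRT (lam : ℕ → ℕ) (m : ℕ) (TE T : ℕ × ℕ → ℕ) : ℕ → ℕ → ℕ := fun j b =>
  if inRangeBox lam m TE j b then nthInf (valSet lam m TE T j) (b - 1) else 0

/-- `s_i · F`: exchange the entries `i` and `i+1` of a standard ribbon tableau. -/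
def swapSRT (i : ℕ) (F : ℕ → ℕ → ℕ) : ℕ → ℕ → ℕ := fun j b =>
  if F j b = i then i + 1 else if F j b = i + 1 then i else F j b

/-- `i` appears strictly above `i+1` in `F`. -/
def aboveIn (lam : ℕ → ℕ) (m : ℕ) (TE : ℕ × ℕ → ℕ) (F : ℕ → ℕ → ℕ) (i : ℕ) : Prop :=
  ∃ j b j' b', inRangeBox lam m TE j b ∧ inRangeBox lam m TE j' b' ∧
    F j b = i ∧ F j' b' = i + 1 ∧ rowOfBox lam m TE j b < rowOfBox lam m TE j' b'

/-- `i` and `i+1` lie in the same row of `F`. -/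
def sameRowIn (lam : ℕ → ℕ) (m : ℕ) (TE : ℕ × ℕ → ℕ) (F : ℕ → ℕ → ℕ) (i : ℕ) : Prop :=
  ∃ j b j' b', inRangeBox lam m TE j b ∧ inRangeBox lam m TE j' b' ∧
    F j b = i ∧ F j' b' = i + 1 ∧ rowOfBox lam m TE j b = rowOfBox lam m TE j' b'

/-- The `0`-Hecke operator `π_i` on `ℂ·SRT(α_E)` (inside the ambient free module). -/
def piSRT (lam : ℕ → ℕ) (m : ℕ) (TE : ℕ × ℕ → ℕ) (i : ℕ) :
    ((ℕ → ℕ → ℕ) →₀ ℂ) →ₗ[ℂ] ((ℕ → ℕ → ℕ) →₀ ℂ) :=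
  Finsupp.lsum ℂ fun F => LinearMap.toSpanSingleton ℂ ((ℕ → ℕ → ℕ) →₀ ℂ)
    (if aboveIn lam m TE F i then Finsupp.single F (1 : ℂ)
     else if sameRowIn lam m TE F i then 0
     else Finsupp.single (swapSRT i F) (1 : ℂ))

/-! ### Weak Bruhat interval modules -/

/-- The `0`-Hecke operator `π_i` of the weak Bruhat interval module `B(σ, ρ)`. -/
def piB (m : ℕ) (σ ρ : Equiv.Perm ℕ) (i : ℕ) :
    (Equiv.Perm ℕ →₀ ℂ) →ₗ[ℂ] (Equiv.Perm ℕ →₀ ℂ) :=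
  Finsupp.lsum ℂ fun γ => LinearMap.toSpanSingleton ℂ (Equiv.Perm ℕ →₀ ℂ)
    (if DesL m γ i then Finsupp.single γ (1 : ℂ)
     else if Equiv.swap i (i + 1) * γ ∈ weakInterval m σ ρ then
       Finsupp.single (Equiv.swap i (i + 1) * γ) (1 : ℂ)
     else 0)

/-- The projection `pr : B(σ, ρ) → B(σ, ρ')`. -/
def prMap (m : ℕ) (σ ρ' : Equiv.Perm ℕ) :
    (Equiv.Perm ℕ →₀ ℂ) →ₗ[ℂ] (Equiv.Perm ℕ →₀ ℂ) :=
  Finsupp.lsum ℂ fun γ => LinearMap.toSpanSingleton ℂ (Equiv.Perm ℕ →₀ ℂ)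
    (if γ ∈ weakInterval m σ ρ' then Finsupp.single γ (1 : ℂ) else 0)

/-- The linear map `ℂ·E → B(sfread(T_E), sfread(T'_E))`, `T ↦ sfread(T)`. -/
def thetaMap (lam : ℕ → ℕ) (m : ℕ) (TE : ℕ × ℕ → ℕ) :
    ((ℕ × ℕ → ℕ) →₀ ℂ) →ₗ[ℂ] (Equiv.Perm ℕ →₀ ℂ) :=
  Finsupp.lsum ℂ fun T => LinearMap.toSpanSingleton ℂ (Equiv.Perm ℕ →₀ ℂ)
    (if IsIGLT lam m T ∧ TabEquiv lam TE T then
      Finsupp.single (sfread lam m TE T) (1 : ℂ) else 0)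

/-! ### `itread`, `w₀` of parabolic subgroups and `𝒯^⊙_{α_E}` -/

/-- `σ` lies in the subgroup generated by `{s_j : j ∈ S}`. -/
def genBy (S : Set ℕ) (σ : Equiv.Perm ℕ) : Prop :=
  ∃ w : List ℕ, (∀ j ∈ w, j ∈ S) ∧ wordProd w = σ

/-- The longest element of the parabolic subgroup of `S_m` generated by `{s_j : j ∈ S}`. -/
def longestIn (m : ℕ) (S : Set ℕ) : Equiv.Perm ℕ :=
  if h : ∃ σ, genBy S σ ∧ ∀ τ, genBy S τ → permLength m τ ≤ permLength m σ then h.choose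
  else 1

/-- `set((α_E)_⊙) = {d_j : 1 ≤ j ≤ k, columns j and j+1 connected}`. -/
def odotSet (lam : ℕ → ℕ) (m : ℕ) (TE : ℕ × ℕ → ℕ) : Set ℕ :=
  {d | ∃ j, 1 ≤ j ∧ j ≤ numDesc lam m TE ∧ connAt lam m TE j ∧ d = dval lam m TE j}

/-- `set(((α_E)_⊙)^c) = [1, m-1] \ set((α_E)_⊙)`. -/
def odotComplSet (lam : ℕ → ℕ) (m : ℕ) (TE : ℕ × ℕ → ℕ) : Set ℕ :=
  {i | 1 ≤ i ∧ i ≤ m - 1 ∧ i ∉ odotSet lam m TE}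

/-- The reading word `itread(F)` of an SRT of shape `α_E`: entries from left to right,
starting with the bottom row and proceeding upwards. -/
def itreadList (lam : ℕ → ℕ) (m : ℕ) (TE : ℕ × ℕ → ℕ) (F : ℕ → ℕ → ℕ) : List ℕ :=
  let k := numDesc lam m TE
  let rmax : ℤ := (colLen lam m TE 1 : ℤ) - 1
  let rmin : ℤ := topRowZ lam m TE (k + 1)
  ((List.range (rmax - rmin + 1).toNat).map fun t =>
    (List.range (k + 1)).filterMap fun j0 =>
      let j := j0 + 1
      let b : ℤ := (rmax - t) - topRowZ lam m TE j + 1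
      if 1 ≤ b ∧ b ≤ (colLen lam m TE j : ℤ) then some (F j b.toNat) else none).flatten

/-- The one-line notation of `σ ∈ S_m`. -/
def oneLineList (m : ℕ) (σ : Equiv.Perm ℕ) : List ℕ :=
  (List.range m).map fun t => σ (t + 1)


/-! ### Auxiliary machinery for the braid relation -/

private def tauv (j v : ℕ) : ℕ := if v = j then j + 1 else if v = j + 1 then j else v

private lemma tauv_self (j : ℕ) : tauv j j = j + 1 := by unfold tauv; split_ifs <;> omega

private lemma tauv_succ (j : ℕ) : tauv j (j + 1) = j := by unfold tauv; split_ifs <;> omega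

private lemma tauv_pred (j : ℕ) : tauv (j + 1) j = j := by unfold tauv; split_ifs <;> omega

private lemma tauv_two (j : ℕ) : tauv j (j + 1 + 1) = j + 1 + 1 := by
  unfold tauv; split_ifs <;> omega

private lemma tauv_other (j v : ℕ) (h1 : v ≠ j) (h2 : v ≠ j + 1) : tauv j v = v := by
  unfold tauv; split_ifs <;> omega

private lemma tauv_eq_iff (j v x : ℕ) : tauv j x = v ↔ x = tauv j v := by
  unfold tauv; split_ifs <;> omega

private lemma tauv_braid (i x : ℕ) :
    tauv i (tauv (i + 1) (tauv i x)) = tauv (i + 1) (tauv i (tauv (i + 1) x)) := by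
  by_cases h1 : x = i
  · subst h1; simp only [tauv_self, tauv_succ, tauv_pred, tauv_two]
  · by_cases h2 : x = i + 1
    · subst h2; simp only [tauv_self, tauv_succ, tauv_pred, tauv_two]
    · by_cases h3 : x = i + 1 + 1
      · subst h3; simp only [tauv_self, tauv_succ, tauv_pred, tauv_two]
      · simp only [tauv_other i x h1 h2, tauv_other (i + 1) x h2 h3]

private lemma swapTab_apply (lam : ℕ → ℕ) (j : ℕ) (T : ℕ × ℕ → ℕ) (p : ℕ × ℕ) :
    swapTab lam j T p = if IsCell lam p then tauv j (T p) else 0 := rfl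

private lemma rowSet_swapTab (lam : ℕ → ℕ) (j : ℕ) (T : ℕ × ℕ → ℕ) (v : ℕ) :
    rowSet lam (swapTab lam j T) v = rowSet lam T (tauv j v) := by
  ext r
  constructor
  · rintro ⟨c, hc, hv⟩
    rw [swapTab_apply, if_pos hc] at hv
    exact ⟨c, hc, (tauv_eq_iff j v (T (r, c))).mp hv⟩
  · rintro ⟨c, hc, hv⟩
    refine ⟨c, hc, ?_⟩
    rw [swapTab_apply, if_pos hc]
    exact (tauv_eq_iff j v (T (r, c))).mpr hv

private lemma rtop_swapTab (lam : ℕ → ℕ) (j : ℕ) (T : ℕ × ℕ → ℕ) (v : ℕ) :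
    rtop lam (swapTab lam j T) v = rtop lam T (tauv j v) := by
  unfold rtop; rw [rowSet_swapTab]

private lemma rbot_swapTab (lam : ℕ → ℕ) (j : ℕ) (T : ℕ × ℕ → ℕ) (v : ℕ) :
    rbot lam (swapTab lam j T) v = rbot lam T (tauv j v) := by
  unfold rbot; rw [rowSet_swapTab]

private def AdjP (lam : ℕ → ℕ) (T : ℕ × ℕ → ℕ) (u v : ℕ) : Prop :=
  ∃ r c, IsCell lam (r, c) ∧ IsCell lam (r + 1, c) ∧ T (r, c) = u ∧ T (r + 1, c) = v

private lemma adjP_swapTab (lam : ℕ → ℕ) (j : ℕ) (T : ℕ × ℕ → ℕ) (u v : ℕ) :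
    AdjP lam (swapTab lam j T) u v ↔ AdjP lam T (tauv j u) (tauv j v) := by
  unfold AdjP
  constructor
  · rintro ⟨r, c, hc1, hc2, e1, e2⟩
    rw [swapTab_apply, if_pos hc1] at e1
    rw [swapTab_apply, if_pos hc2] at e2
    exact ⟨r, c, hc1, hc2, (tauv_eq_iff _ _ _).mp e1, (tauv_eq_iff _ _ _).mp e2⟩
  · rintro ⟨r, c, hc1, hc2, e1, e2⟩
    refine ⟨r, c, hc1, hc2, ?_, ?_⟩
    · rw [swapTab_apply, if_pos hc1]; exact (tauv_eq_iff _ _ _).mpr e1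
    · rw [swapTab_apply, if_pos hc2]; exact (tauv_eq_iff _ _ _).mpr e2

private lemma isDescent_def (lam : ℕ → ℕ) (T : ℕ × ℕ → ℕ) (j : ℕ) :
    IsDescent lam T j ↔ rtop lam T j < rbot lam T (j + 1) := Iff.rfl

private lemma isAttacking_def (lam : ℕ → ℕ) (T : ℕ × ℕ → ℕ) (j : ℕ)
    (h : (rowSet lam T (j + 1)).Nonempty) :
    IsAttacking lam T j ↔
      (rtop lam T j < rbot lam T (j + 1)) ∧
        (AdjP lam T j (j + 1) ∨ rtop lam T (j + 1) ≤ rbot lam T j) := by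
  unfold IsAttacking IsDescent
  refine and_congr Iff.rfl (or_congr Iff.rfl ?_)
  constructor
  · rintro ⟨p, hc, hv, hr⟩
    exact le_trans (Nat.sInf_le ⟨p.2, hc, hv⟩) hr
  · intro hle
    obtain ⟨c, hc, hv⟩ := Nat.sInf_mem h
    exact ⟨(rtop lam T (j + 1), c), hc, hv, hle⟩

private lemma swapTab_braid (lam : ℕ → ℕ) (i : ℕ) (T : ℕ × ℕ → ℕ) :
    swapTab lam i (swapTab lam (i + 1) (swapTab lam i T)) =
      swapTab lam (i + 1) (swapTab lam i (swapTab lam (i + 1) T)) := by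
  funext p
  by_cases h : IsCell lam p
  · simp only [swapTab_apply, if_pos h, tauv_braid]
  · simp only [swapTab_apply, if_neg h]

private lemma piOp_single (lam : ℕ → ℕ) (j : ℕ) (T : ℕ × ℕ → ℕ) :
    piOp lam j (Finsupp.single T (1 : ℂ)) =
      if ¬ IsDescent lam T j then Finsupp.single T (1 : ℂ)
      else if IsAttacking lam T j then 0
      else Finsupp.single (swapTab lam j T) (1 : ℂ) := by
  unfold piOp
  rw [Finsupp.lsum_single, LinearMap.toSpanSingleton_apply_one]

set_option maxHeartbeats 4000000 in
private lemma braid_single (lam : ℕ → ℕ) (i : ℕ) (T : ℕ × ℕ → ℕ)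
    (h1 : (rowSet lam T i).Nonempty) (h2 : (rowSet lam T (i + 1)).Nonempty)
    (h3 : (rowSet lam T (i + 1 + 1)).Nonempty)
    (hb1 : rtop lam T i ≤ rbot lam T i)
    (hb2 : rtop lam T (i + 1) ≤ rbot lam T (i + 1))
    (hb3 : rtop lam T (i + 1 + 1) ≤ rbot lam T (i + 1 + 1)) :
    piOp lam i (piOp lam (i + 1) (piOp lam i (Finsupp.single T (1 : ℂ)))) =
      piOp lam (i + 1) (piOp lam i (piOp lam (i + 1) (Finsupp.single T (1 : ℂ)))) := by
  simp only [piOp_single, apply_ite (⇑(piOp lam i)), apply_ite (⇑(piOp lam (i + 1))),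
    map_zero, isDescent_def, isAttacking_def, rowSet_swapTab, rtop_swapTab, rbot_swapTab,
    adjP_swapTab, tauv_self, tauv_succ, tauv_pred, tauv_two, swapTab_braid, h1, h2, h3]
  split_ifs <;>
    first
      | rfl
      | (exfalso; first | omega | (simp_all only [not_or, not_lt, not_le]; omega))

/-- For every `1 ≤ i ≤ m-2`, the operators on `ℂ·IGLT_m(λ)` satisfy the
braid relation `π_i ∘ π_{i+1} ∘ π_i = π_{i+1} ∘ π_i ∘ π_{i+1}`. -/
theorem piOp_braid (n m : ℕ) (hn : 0 < n) (hm : 0 < m) (hmn : m ≤ n)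
    (lam : ℕ → ℕ) (hlam : IsPartitionOf n lam)
    (i : ℕ) (hi1 : 1 ≤ i) (hi2 : i ≤ m - 2) :
    ∀ v ∈ Submodule.span ℂ (iglSingles lam m),
      piOp lam i (piOp lam (i + 1) (piOp lam i v)) =
        piOp lam (i + 1) (piOp lam i (piOp lam (i + 1) v)) := by
  have key : ∀ T : ℕ × ℕ → ℕ, IsIGLT lam m T →
      piOp lam i (piOp lam (i + 1) (piOp lam i (Finsupp.single T (1 : ℂ)))) =
        piOp lam (i + 1) (piOp lam i (piOp lam (i + 1) (Finsupp.single T (1 : ℂ)))) := by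
    intro T hT
    have hbdd : ∀ v : ℕ, BddAbove (rowSet lam T v) := by
      intro v
      refine ⟨n, fun r hr => ?_⟩
      obtain ⟨c, hc, -⟩ := hr
      have h3 : c ≤ lam r := hc.2.2
      have h2 : 1 ≤ c := hc.2.1
      by_contra hrn
      have h0 : lam r = 0 := hlam.2.1 r (by omega)
      omega
    have hne : ∀ v : ℕ, 1 ≤ v → v ≤ m → (rowSet lam T v).Nonempty := by
      intro v hv1 hv2
      obtain ⟨p, hp, hpv⟩ := hT.2.2.2.2 v hv1 hv2
      exact ⟨p.1, p.2, hp, hpv⟩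
    have hle : ∀ v : ℕ, 1 ≤ v → v ≤ m → rtop lam T v ≤ rbot lam T v := by
      intro v hv1 hv2
      exact Nat.sInf_le (Nat.sSup_mem (hne v hv1 hv2) (hbdd v))
    exact braid_single lam i T (hne i hi1 (by omega)) (hne (i + 1) (by omega) (by omega))
      (hne (i + 1 + 1) (by omega) (by omega)) (hle i hi1 (by omega))
      (hle (i + 1) (by omega) (by omega)) (hle (i + 1 + 1) (by omega) (by omega))
  intro v hv
  induction hv using Submodule.span_induction with
  | mem x hx => obtain ⟨T, hT, rfl⟩ := hx; exact key T hT
  | zero => simp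
  | add x y _ _ hx hy => simp only [map_add, hx, hy]
  | smul a x _ hx => simp only [map_smul, hx]

end Genomic
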